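/- Let B_q^J(𝔤) be the hybrid q-Boson algebra of a subset J ⊆ I. There is a ℚ(q)-algebra anti-involution φ of B_q^J(𝔤) with φ(f_i) = e_i and φ(e_i) = f_i for i ∈ I∖J, φ(f_i) = e_it_i and φ(e_i) = t_i^{-1}f_i for i ∈ J, and φ(q^h) = q^h. -/

import Mathlib

noncomputable section

open scoped TensorProduct

/-- The field `ℚ(q)` of rational functions. -/
abbrev KK : Type := RatFunc ℚ

/-- The indeterminate `q ∈ ℚ(q)`. -/
def qq : KK := RatFunc.X

/-- `q^m` for `m ∈ ℤ`. -/
def qpow (m : ℤ) : KK := qq ^ m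

/-- The quantum integer `[n]_i = (q_i^n - q_i^{-n})/(q_i - q_i^{-1})` where `q_i = q^d`. -/
def qint (d n : ℤ) : KK := (qpow (d * n) - qpow (-(d * n))) / (qpow d - qpow (-d))

/-- The quantum factorial `[n]_i!`. -/
def qfact (d : ℤ) : ℕ → KK
  | 0 => 1
  | n + 1 => qfact d n * qint d (n + 1)

/-- A symmetrizable generalized Cartan matrix `a` with symmetrizers `d i`, so that
`(α_i, α_j) = d i * a i j`. -/
structure CartanData (I : Type) : Type where
  a : I → I → ℤ
  d : I → ℤ
  d_pos : ∀ i, 0 < d i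
  a_diag : ∀ i, a i i = 2
  a_offdiag : ∀ i j, i ≠ j → a i j ≤ 0
  symm : ∀ i j, d i * a i j = d j * a j i

/-- Generators of the quantum group `U_q(𝔤)` (adjoint form: `t i = q^{(α_i,α_i)/2 · h_i}`). -/
inductive QGen (I : Type) : Type
  | e : I → QGen I
  | f : I → QGen I
  | t : I → QGen I
  | tinv : I → QGen I

variable {I : Type}

/-- The free algebra on the generators of `U_q(𝔤)`. -/
abbrev FA (I : Type) : Type := FreeAlgebra KK (QGen I)

def ge (i : I) : FA I := FreeAlgebra.ι KK (QGen.e i)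
def gf (i : I) : FA I := FreeAlgebra.ι KK (QGen.f i)
def gT (i : I) : FA I := FreeAlgebra.ι KK (QGen.t i)
def gTinv (i : I) : FA I := FreeAlgebra.ι KK (QGen.tinv i)

/-- Divided power `e_i^{(s)}` in the free algebra. -/
def edp (C : CartanData I) (i : I) (s : ℕ) : FA I := (qfact (C.d i) s)⁻¹ • ge i ^ s

/-- Divided power `f_i^{(s)}` in the free algebra. -/
def fdp (C : CartanData I) (i : I) (s : ℕ) : FA I := (qfact (C.d i) s)⁻¹ • gf i ^ s

/-- The quantum Serre element `Σ_{s} (-1)^s e_i^{(s)} e_j e_i^{(1-a_{ij}-s)}`. -/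
def serreE (C : CartanData I) (i j : I) : FA I :=
  ∑ s ∈ Finset.range ((1 - C.a i j).toNat + 1),
    ((-1 : KK) ^ s) • (edp C i s * ge j * edp C i ((1 - C.a i j).toNat - s))

/-- The quantum Serre element `Σ_{s} (-1)^s f_i^{(s)} f_j f_i^{(1-a_{ij}-s)}`. -/
def serreF (C : CartanData I) (i j : I) : FA I :=
  ∑ s ∈ Finset.range ((1 - C.a i j).toNat + 1),
    ((-1 : KK) ^ s) • (fdp C i s * gf j * fdp C i ((1 - C.a i j).toNat - s))

/-- The defining relations of the quantum group `U_q(𝔤)`. -/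
inductive QRel [DecidableEq I] (C : CartanData I) : FA I → FA I → Prop
  | t_tinv (i : I) : QRel C (gT i * gTinv i) 1
  | tinv_t (i : I) : QRel C (gTinv i * gT i) 1
  | t_t (i j : I) : QRel C (gT i * gT j) (gT j * gT i)
  | t_tinv_comm (i j : I) : QRel C (gT i * gTinv j) (gTinv j * gT i)
  | t_e (i j : I) : QRel C (gT i * ge j) (qpow (C.d i * C.a i j) • (ge j * gT i))
  | t_f (i j : I) : QRel C (gT i * gf j) (qpow (-(C.d i * C.a i j)) • (gf j * gT i))
  | e_f (i j : I) :
      QRel C (ge i * gf j - gf j * ge i)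
        (if i = j then (qpow (C.d i) - qpow (-C.d i))⁻¹ • (gT i - gTinv i) else 0)
  | serre_e (i j : I) : i ≠ j → QRel C (serreE C i j) 0
  | serre_f (i j : I) : i ≠ j → QRel C (serreF C i j) 0

/-- The quantum group `U_q(𝔤)`, presented by generators and relations. -/
abbrev Uq [DecidableEq I] (C : CartanData I) : Type := RingQuot (QRel C)

variable [DecidableEq I]

/-- The canonical map from the free algebra onto `U_q(𝔤)`. -/
def uMk (C : CartanData I) : FA I →ₐ[KK] Uq C := RingQuot.mkAlgHom KK (QRel C)

def uE (C : CartanData I) (i : I) : Uq C := uMk C (ge i)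
def uF (C : CartanData I) (i : I) : Uq C := uMk C (gf i)
def uT (C : CartanData I) (i : I) : Uq C := uMk C (gT i)
def uTinv (C : CartanData I) (i : I) : Uq C := uMk C (gTinv i)

/-- Divided power `e_i^{(s)} ∈ U_q(𝔤)`. -/
def uEdp (C : CartanData I) (i : I) (s : ℕ) : Uq C := (qfact (C.d i) s)⁻¹ • uE C i ^ s

/-- Divided power `f_i^{(s)} ∈ U_q(𝔤)`. -/
def uFdp (C : CartanData I) (i : I) (s : ℕ) : Uq C := (qfact (C.d i) s)⁻¹ • uF C i ^ s

/-- The negative half `U_q^-(𝔤)`, the subalgebra generated by the `f_i`. -/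
def Uneg (C : CartanData I) : Subalgebra KK (Uq C) :=
  Algebra.adjoin KK (Set.range (uF C))

/-- The weight `-β` component of `U_q^-(𝔤)` (spanned by monomials in the `f_i` of
content `β ∈ Q_+`). -/
def negWt (C : CartanData I) (β : I →₀ ℕ) : Submodule KK (Uq C) :=
  Submodule.span KK
    {u | ∃ w : List I, (∀ j, w.count j = β j) ∧ u = (w.map (uF C)).prod}

/-- The pairing `(α_i, β) = Σ_j β_j (α_i, α_j)` for `β ∈ Q_+`. -/
def pairB (C : CartanData I) (i : I) (β : I →₀ ℕ) : ℤ :=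
  β.sum fun j m => C.d i * C.a i j * (m : ℤ)

/-- `f_j` as an element of the subalgebra `U_q^-(𝔤)`. -/
def uFneg (C : CartanData I) (j : I) : ↥(Uneg C) :=
  ⟨uF C j, Algebra.subset_adjoin ⟨j, rfl⟩⟩

/-- `t_i^m` for `m ∈ ℤ`. -/
def tpow (C : CartanData I) (i : I) (m : ℤ) : Uq C :=
  if 0 ≤ m then uT C i ^ m.toNat else uTinv C i ^ (-m).toNat


/-- The modified quantum Serre element `e_{i,j}` of the hybrid `q`-Boson algebra
`B_q^J(𝔤)`, carrying extra powers of `q_i` depending on whether `i, j` lie in `J`. -/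
def serreEB (C : CartanData I) (J : Set I) [DecidablePred (· ∈ J)] (i j : I) : FA I :=
  ∑ s ∈ Finset.range ((1 - C.a i j).toNat + 1),
    ((-1 : KK) ^ s *
        qpow (C.d i *
          (if i ∉ J ∧ j ∈ J then (1 - C.a i j - (s : ℤ)) * C.a i j
           else if i ∈ J ∧ j ∉ J then (s : ℤ) * C.a i j
           else 0))) •
      (edp C i s * ge j * edp C i ((1 - C.a i j).toNat - s))

/-- The defining relations of the hybrid `q`-Boson algebra `B_q^J(𝔤)`. -/
inductive BRel [DecidableEq I] (C : CartanData I) (J : Set I) [DecidablePred (· ∈ J)] :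
    FA I → FA I → Prop
  | t_tinv (i : I) : BRel C J (gT i * gTinv i) 1
  | tinv_t (i : I) : BRel C J (gTinv i * gT i) 1
  | t_t (i j : I) : BRel C J (gT i * gT j) (gT j * gT i)
  | t_tinv_comm (i j : I) : BRel C J (gT i * gTinv j) (gTinv j * gT i)
  | t_e (i j : I) : BRel C J (gT i * ge j) (qpow (C.d i * C.a i j) • (ge j * gT i))
  | t_f (i j : I) : BRel C J (gT i * gf j) (qpow (-(C.d i * C.a i j)) • (gf j * gT i))
  | e_f_mem (i j : I) : i ∈ J →
      BRel C J (ge i * gf j - gf j * ge i)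
        (if i = j then (qpow (C.d i) - qpow (-C.d i))⁻¹ • (gT i - gTinv i) else 0)
  | e_f_not (i j : I) : i ∉ J →
      BRel C J (ge i * gf j)
        (qpow (-(C.d i * C.a i j)) • (gf j * ge i) + (if i = j then 1 else 0))
  | serre_f (i j : I) : i ≠ j → BRel C J (serreF C i j) 0
  | serre_e (i j : I) : i ≠ j → BRel C J (serreEB C J i j) 0

/-- The hybrid `q`-Boson algebra `B_q^J(𝔤)`, presented by generators and relations. -/
abbrev BqJ [DecidableEq I] (C : CartanData I) (J : Set I) [DecidablePred (· ∈ J)] : Type :=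
  RingQuot (BRel C J)

def bMk (C : CartanData I) (J : Set I) [DecidablePred (· ∈ J)] : FA I →ₐ[KK] BqJ C J :=
  RingQuot.mkAlgHom KK (BRel C J)

def bE (C : CartanData I) (J : Set I) [DecidablePred (· ∈ J)] (i : I) : BqJ C J :=
  bMk C J (ge i)
def bF (C : CartanData I) (J : Set I) [DecidablePred (· ∈ J)] (i : I) : BqJ C J :=
  bMk C J (gf i)
def bT (C : CartanData I) (J : Set I) [DecidablePred (· ∈ J)] (i : I) : BqJ C J :=
  bMk C J (gT i)
def bTinv (C : CartanData I) (J : Set I) [DecidablePred (· ∈ J)] (i : I) : BqJ C J :=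
  bMk C J (gTinv i)

end

/-!
Define `φ` on generators as a homomorphism from the free algebra into the opposite algebra
and check the defining relations. With `t_J(i) = t_i` for `i ∈ J` and `1` otherwise,
`φ(f_i) = e_i t_J(i)` and `φ(e_i) = t_J(i)⁻¹ f_i`. Every generator `q`-commutes with the
`t_J(k)`, so a word in the `φ(f_i)` is a power of `q` times the same word in the `e_i`,
followed by a torus element. In the `s`-th term of the Serre element `f_{i,j}` that power of
`q` is an affine function of `s` whose non-constant part is exactly the twist built into
`e_{i,j}`; hence `φ(f_{i,j})` is a scalar multiple of `e_{i,j} t_J(i)^N t_J(j)`, and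
symmetrically `φ(e_{i,j})` is a torus element times a scalar multiple of `f_{i,j}`. Finally
`φ ∘ φ` is an algebra endomorphism fixing the generators.
-/

noncomputable section

lemma qpow_zero : qpow 0 = 1 := zpow_zero qq

lemma qpow_add (m n : ℤ) : qpow (m + n) = qpow m * qpow n :=
  zpow_add₀ RatFunc.X_ne_zero m n

lemma Nat.add_choose_two (m n : ℕ) : (m + n).choose 2 = m.choose 2 + n.choose 2 + m * n := by
  induction n with
  | zero => simp
  | succ n ih =>
    rw [← add_assoc, Nat.choose_succ_succ', Nat.choose_succ_succ' n, ih]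
    simp only [Nat.choose_one_right]; ring

section QComm

variable {A : Type} [Ring A] [Algebra KK A]

def QComm (μ : ℤ) (a b : A) : Prop := a * b = qpow μ • (b * a)

namespace QComm

variable {μ ν : ℤ} {a b c : A}

lemma zero_iff : QComm 0 a b ↔ Commute a b := by
  rw [QComm, qpow_zero, one_smul]; rfl

lemma symm (h : QComm μ a b) : QComm (-μ) b a := by
  rw [QComm, h, smul_smul, ← qpow_add, neg_add_cancel, qpow_zero, one_smul]

lemma mul_right (hb : QComm μ a b) (hc : QComm ν a c) : QComm (μ + ν) a (b * c) := by
  rw [QComm, ← mul_assoc, hb, smul_mul_assoc, mul_assoc, hc, mul_smul_comm, smul_smul,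
    ← qpow_add, mul_assoc]

lemma mul_left (ha : QComm μ a c) (hb : QComm ν b c) : QComm (μ + ν) (a * b) c := by
  rw [QComm, mul_assoc, hb, mul_smul_comm, ← mul_assoc, ha, smul_mul_assoc, smul_smul,
    ← qpow_add, add_comm, mul_assoc]

lemma mul_mul {a' b' : A} {μ' ν' : ℤ} (h₁ : QComm μ a b) (h₂ : QComm ν a b')
    (h₃ : QComm μ' a' b) (h₄ : QComm ν' a' b') :
    QComm (μ + ν + (μ' + ν')) (a * a') (b * b') :=
  (h₁.mul_right h₂).mul_left (h₃.mul_right h₄)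

lemma pow_left (h : QComm μ a b) (n : ℕ) : QComm (n * μ) (a ^ n) b := by
  induction n with
  | zero => simpa using (zero_iff.mpr (Commute.one_left b))
  | succ n ih =>
    rw [pow_succ, show ((n + 1 : ℕ) : ℤ) * μ = n * μ + μ by push_cast; ring]
    exact ih.mul_left h

lemma pow_right (h : QComm μ a b) (n : ℕ) : QComm (n * μ) a (b ^ n) := by
  simpa using (h.symm.pow_left n).symm

lemma op (h : QComm μ a b) : QComm μ (MulOpposite.op b) (MulOpposite.op a) := by
  rw [QComm, ← MulOpposite.op_mul, h, MulOpposite.op_smul, MulOpposite.op_mul]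

lemma units_inv_left {u : Aˣ} (h : QComm μ (u : A) b) : QComm (-μ) (↑u⁻¹ : A) b := by
  calc (↑u⁻¹ : A) * b = ↑u⁻¹ * (b * u) * ↑u⁻¹ := by simp [mul_assoc]
    _ = ↑u⁻¹ * (qpow (-μ) • (u * b)) * ↑u⁻¹ := by rw [h.symm]
    _ = qpow (-μ) • (b * ↑u⁻¹) := by simp

lemma mul_pow (h : QComm μ a b) (n : ℕ) :
    (b * a) ^ n = qpow (μ * n.choose 2) • (b ^ n * a ^ n) := by
  induction n with
  | zero => simp [qpow_zero]
  | succ n ih =>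
    have hn : a ^ n * b = qpow (n * μ) • (b * a ^ n) := h.pow_left n
    calc (b * a) ^ (n + 1) = qpow (μ * n.choose 2) • (b ^ n * (a ^ n * b) * a) := by
          rw [pow_succ, ih, smul_mul_assoc]; noncomm_ring
      _ = qpow (μ * (n + 1).choose 2) • (b ^ (n + 1) * a ^ (n + 1)) := by
          have hc : (n + 1).choose 2 = n.choose 2 + n := by
            rw [Nat.choose_succ_succ', Nat.choose_one_right, add_comm]
          rw [hn, mul_smul_comm, smul_mul_assoc, smul_smul, ← qpow_add, hc, pow_succ, pow_succ]
          congr 1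
          · congr 1; push_cast; ring
          · simp only [mul_assoc]

lemma pow_mul_mul_pow {xi xj wi wj : A} {μii μij μji : ℤ} (hw : Commute wi wj)
    (hii : QComm μii wi xi) (hij : QComm μij wi xj) (hji : QComm μji wj xi) (s m : ℕ) :
    (xi * wi) ^ s * (xj * wj) * (xi * wi) ^ m =
      qpow (μii * (s + m).choose 2 + s * μij + m * μji) •
        (xi ^ s * xj * xi ^ m * (wi ^ (s + m) * wj)) := by
  have hs : wi ^ s * xj = qpow (s * μij) • (xj * wi ^ s) := hij.pow_left s
  have hm : wj * xi ^ m = qpow (m * μji) • (xi ^ m * wj) := hji.pow_right m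
  have hsm : wi ^ s * xi ^ m = qpow (m * (s * μii)) • (xi ^ m * wi ^ s) :=
    (hii.pow_left s).pow_right m
  calc (xi * wi) ^ s * (xj * wj) * (xi * wi) ^ m
      = qpow (μii * s.choose 2 + μii * m.choose 2) •
          (xi ^ s * (wi ^ s * xj) * (wj * xi ^ m) * wi ^ m) := by
        rw [hii.mul_pow s, hii.mul_pow m]
        simp only [smul_mul_assoc, mul_smul_comm, smul_smul, ← qpow_add]
        congr 1
        · rw [add_comm]
        · noncomm_ring
    _ = qpow (μii * s.choose 2 + μii * m.choose 2 + s * μij + m * μji) •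
          (xi ^ s * xj * (wi ^ s * xi ^ m) * (wj * wi ^ m)) := by
        rw [hs, hm]
        simp only [smul_mul_assoc, mul_smul_comm, smul_smul, ← qpow_add]
        congr 1
        · congr 1; ring
        · noncomm_ring
    _ = _ := by
        rw [hsm, (hw.symm.pow_right m).eq]
        simp only [smul_mul_assoc, mul_smul_comm, smul_smul, ← qpow_add]
        congr 1
        · congr 1; rw [Nat.add_choose_two]; push_cast; ring
        · rw [pow_add]; noncomm_ring

lemma pow_mul_mul_pow_left {xi xj wi wj : A} {μii μij μji : ℤ} (hw : Commute wi wj)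
    (hii : QComm μii xi wi) (hij : QComm μij xj wi) (hji : QComm μji xi wj) (s m : ℕ) :
    (wi * xi) ^ s * (wj * xj) * (wi * xi) ^ m =
      qpow (μii * (s + m).choose 2 + m * μij + s * μji) •
        (wj * wi ^ (s + m) * (xi ^ s * xj * xi ^ m)) := by
  apply MulOpposite.op_injective
  have h := pow_mul_mul_pow hw.op hii.op hij.op hji.op m s
  simp only [← MulOpposite.op_mul, ← MulOpposite.op_pow, ← MulOpposite.op_smul] at h
  rw [add_comm m s] at h
  simpa only [mul_assoc] using h

end QComm

end QComm

section SerreSum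

variable {A : Type} [Ring A] [Algebra KK A]

def serreSum (c : ℕ → KK) (N : ℕ) (x y : A) : A :=
  ∑ s ∈ Finset.range (N + 1), c s • (x ^ s * y * x ^ (N - s))

variable {c c' : ℕ → KK} {N : ℕ} {x y : A}

lemma serreSum_congr (h : ∀ s ≤ N, c s = c' s) : serreSum c N x y = serreSum c' N x y :=
  Finset.sum_congr rfl fun s hs => by rw [h s (Nat.lt_succ_iff.mp (Finset.mem_range.mp hs))]

lemma serreSum_const_mul (k : KK) :
    serreSum (fun s => k * c s) N x y = k • serreSum c N x y := by
  simp only [serreSum, Finset.smul_sum, smul_smul]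

lemma AlgHom.map_serreSum {B : Type} [Ring B] [Algebra KK B] (f : A →ₐ[KK] B) :
    f (serreSum c N x y) = serreSum c N (f x) (f y) := by
  simp only [serreSum, map_sum, map_smul, map_mul, map_pow]

lemma MulOpposite.unop_serreSum {x y : Aᵐᵒᵖ} :
    (serreSum c N x y).unop = serreSum (fun s => c (N - s)) N x.unop y.unop := by
  rw [serreSum, serreSum, Finset.unop_sum, ← Finset.sum_range_reflect (δ := A)]
  refine Finset.sum_congr rfl fun s hs => ?_
  rw [Nat.add_sub_cancel, Nat.sub_sub_self (Nat.lt_succ_iff.mp (Finset.mem_range.mp hs))]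
  simp only [MulOpposite.unop_smul, MulOpposite.unop_mul, MulOpposite.unop_pow, mul_assoc]

lemma serreSum_mul_right {xi xj wi wj : A} {μii μij μji : ℤ} (hw : Commute wi wj)
    (hii : QComm μii wi xi) (hij : QComm μij wi xj) (hji : QComm μji wj xi) :
    serreSum c N (xi * wi) (xj * wj) =
      serreSum (fun s => c s * qpow (μii * N.choose 2 + s * μij + (N - s : ℕ) * μji)) N xi xj *
        (wi ^ N * wj) := by
  rw [serreSum, serreSum, Finset.sum_mul]
  refine Finset.sum_congr rfl fun s hs => ?_
  have hsN : s + (N - s) = N := Nat.add_sub_cancel' (Nat.lt_succ_iff.mp (Finset.mem_range.mp hs))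
  rw [QComm.pow_mul_mul_pow hw hii hij hji, hsN, smul_smul, smul_mul_assoc]

lemma serreSum_mul_left {xi xj wi wj : A} {μii μij μji : ℤ} (hw : Commute wi wj)
    (hii : QComm μii xi wi) (hij : QComm μij xj wi) (hji : QComm μji xi wj) :
    serreSum c N (wi * xi) (wj * xj) =
      wj * wi ^ N * serreSum
        (fun s => c s * qpow (μii * N.choose 2 + (N - s : ℕ) * μij + s * μji)) N xi xj := by
  rw [serreSum, serreSum, Finset.mul_sum]
  refine Finset.sum_congr rfl fun s hs => ?_
  have hsN : s + (N - s) = N := Nat.add_sub_cancel' (Nat.lt_succ_iff.mp (Finset.mem_range.mp hs))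
  rw [QComm.pow_mul_mul_pow_left hw hii hij hji, hsN, smul_smul, mul_smul_comm]

end SerreSum

section SerreCombinatorics

def serreCoeff (d : ℤ) (N s : ℕ) : KK := (-1) ^ s * ((qfact d s)⁻¹ * (qfact d (N - s))⁻¹)

lemma serreCoeff_symm {d : ℤ} {N s : ℕ} (hs : s ≤ N) :
    serreCoeff d N (N - s) = (-1) ^ N * serreCoeff d N s := by
  have hsign : (-1 : KK) ^ (N - s) = (-1) ^ N * (-1) ^ s := by
    rw [← Nat.sub_add_cancel hs, pow_add, Nat.add_sub_cancel, mul_assoc, ← pow_add,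
      Even.neg_one_pow ⟨s, rfl⟩, mul_one]
  rw [serreCoeff, serreCoeff, Nat.sub_sub_self hs, hsign]
  ring

variable {I : Type} (C : CartanData I) (J : Set I) [DecidablePred (· ∈ J)]

def serreTwist (i j : I) (s : ℕ) : ℤ :=
  if i ∉ J ∧ j ∈ J then (1 - C.a i j - (s : ℤ)) * C.a i j
  else if i ∈ J ∧ j ∉ J then (s : ℤ) * C.a i j
  else 0

lemma serreF_eq_serreSum (i j : I) :
    serreF C i j = serreSum (serreCoeff (C.d i) (1 - C.a i j).toNat) (1 - C.a i j).toNat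
      (gf i) (gf j) := by
  refine Finset.sum_congr rfl fun s _ => ?_
  simp only [fdp, serreCoeff, smul_mul_assoc, mul_smul_comm, smul_smul]
  ring_nf

lemma serreEB_eq_serreSum (i j : I) :
    serreEB C J i j = serreSum (fun s => serreCoeff (C.d i) (1 - C.a i j).toNat s *
        qpow (C.d i * serreTwist C J i j s)) (1 - C.a i j).toNat (ge i) (ge j) := by
  refine Finset.sum_congr rfl fun s _ => ?_
  simp only [edp, serreCoeff, serreTwist, smul_mul_assoc, mul_smul_comm, smul_smul]
  ring_nf

def muJ (k l : I) : ℤ := if k ∈ J then C.d k * C.a k l else 0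

lemma exists_serre_exponent {i j : I} (hij : i ≠ j) :
    ∃ κ : ℤ, ∀ s ≤ (1 - C.a i j).toNat,
      muJ C J i i * ((1 - C.a i j).toNat.choose 2 : ℕ) + s * muJ C J i j +
          ((1 - C.a i j).toNat - s : ℕ) * muJ C J j i =
        κ + C.d i * serreTwist C J i j s := by
  set N := (1 - C.a i j).toNat
  have hN : (N : ℤ) = 1 - C.a i j := Int.toNat_of_nonneg (by linarith [C.a_offdiag i j hij])
  refine ⟨muJ C J i i * (N.choose 2 : ℕ) +
    if i ∈ J ∧ j ∈ J then N * (C.d i * C.a i j) else 0, fun s hs => ?_⟩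
  rw [Nat.cast_sub hs]
  by_cases hi : i ∈ J <;> by_cases hj : j ∈ J <;>
    simp only [muJ, serreTwist, hi, hj, ← C.symm i j, if_true, if_false, not_true,
      not_false_eq_true, and_true, and_false] <;>
    first | ring1 | linear_combination (C.d i * C.a i j) * hN

end SerreCombinatorics

section Boson

variable {I : Type} [DecidableEq I] (C : CartanData I) (J : Set I) [DecidablePred (· ∈ J)]

lemma bMk_eq_of_rel {x y : FA I} (h : BRel C J x y) : bMk C J x = bMk C J y :=
  RingQuot.mkAlgHom_rel KK h

lemma bT_mul_bTinv (i : I) : bT C J i * bTinv C J i = 1 := by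
  simpa [bT, bTinv] using bMk_eq_of_rel C J (BRel.t_tinv i)

lemma bTinv_mul_bT (i : I) : bTinv C J i * bT C J i = 1 := by
  simpa [bT, bTinv] using bMk_eq_of_rel C J (BRel.tinv_t i)

lemma commute_bT (i j : I) : Commute (bT C J i) (bT C J j) := by
  simpa [bT, commute_iff_eq] using bMk_eq_of_rel C J (BRel.t_t i j)

lemma commute_bT_bTinv (i j : I) : Commute (bT C J i) (bTinv C J j) := by
  simpa [bT, bTinv, commute_iff_eq] using
    bMk_eq_of_rel C J (BRel.t_tinv_comm i j)

lemma qComm_bT_bE (i j : I) : QComm (C.d i * C.a i j) (bT C J i) (bE C J j) := by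
  simpa [bT, bE, QComm] using bMk_eq_of_rel C J (BRel.t_e i j)

lemma qComm_bT_bF (i j : I) : QComm (-(C.d i * C.a i j)) (bT C J i) (bF C J j) := by
  simpa [bT, bF, QComm] using bMk_eq_of_rel C J (BRel.t_f i j)

lemma bE_mul_bF_sub_of_mem {i : I} (hi : i ∈ J) (j : I) :
    bE C J i * bF C J j - bF C J j * bE C J i =
      if i = j then (qpow (C.d i) - qpow (-C.d i))⁻¹ • (bT C J i - bTinv C J i) else 0 := by
  simpa [bT, bTinv, bE, bF, apply_ite (bMk C J)] using bMk_eq_of_rel C J (BRel.e_f_mem i j hi)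

lemma bE_mul_bF_of_notMem {i : I} (hi : i ∉ J) (j : I) :
    bE C J i * bF C J j =
      qpow (-(C.d i * C.a i j)) • (bF C J j * bE C J i) + if i = j then 1 else 0 := by
  simpa [bE, bF, apply_ite (bMk C J)] using bMk_eq_of_rel C J (BRel.e_f_not i j hi)

lemma qComm_bE_bF {i j : I} (hij : i ≠ j) :
    QComm (if i ∈ J then 0 else -(C.d i * C.a i j)) (bE C J i) (bF C J j) := by
  by_cases hi : i ∈ J
  · simpa [hi, QComm.zero_iff, commute_iff_eq, hij, sub_eq_zero] using
      bE_mul_bF_sub_of_mem C J hi j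
  · simpa [QComm, hi, hij] using bE_mul_bF_of_notMem C J hi j

def bTUnit (i : I) : (BqJ C J)ˣ :=
  ⟨bT C J i, bTinv C J i, bT_mul_bTinv C J i, bTinv_mul_bT C J i⟩

def tJ (i : I) : (BqJ C J)ˣ := if i ∈ J then bTUnit C J i else 1

lemma commute_bT_tJ (i k : I) : Commute (bT C J i) (tJ C J k) := by
  by_cases hk : k ∈ J <;> simp [tJ, bTUnit, hk, commute_bT]

lemma commute_tJ (k l : I) : Commute (tJ C J k : BqJ C J) (tJ C J l) := by
  by_cases hk : k ∈ J
  · rw [tJ, if_pos hk]; exact commute_bT_tJ C J k l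
  · rw [tJ, if_neg hk]; exact Commute.one_left _

lemma qComm_tJ_bE (k l : I) : QComm (muJ C J k l) (tJ C J k : BqJ C J) (bE C J l) := by
  by_cases hk : k ∈ J <;> simp [tJ, bTUnit, muJ, hk, qComm_bT_bE, QComm.zero_iff]

lemma qComm_tJ_bF (k l : I) : QComm (-muJ C J k l) (tJ C J k : BqJ C J) (bF C J l) := by
  by_cases hk : k ∈ J <;> simp [tJ, bTUnit, muJ, hk, qComm_bT_bF, QComm.zero_iff]

lemma qComm_bE_tJ_inv (k l : I) : QComm (muJ C J k l) (bE C J l) (↑(tJ C J k)⁻¹) := by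
  simpa using (qComm_tJ_bE C J k l).units_inv_left.symm

lemma qComm_bF_tJ_inv (k l : I) : QComm (-muJ C J k l) (bF C J l) (↑(tJ C J k)⁻¹) := by
  simpa using (qComm_tJ_bF C J k l).units_inv_left.symm

def phiGen : QGen I → BqJ C J
  | .e i => ↑(tJ C J i)⁻¹ * bF C J i
  | .f i => bE C J i * tJ C J i
  | .t i => bT C J i
  | .tinv i => bTinv C J i

def phiFree : FA I →ₐ[KK] (BqJ C J)ᵐᵒᵖ :=
  FreeAlgebra.lift KK (MulOpposite.op ∘ phiGen C J)

@[simp] lemma unop_phiFree_ge (i : I) :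
    (phiFree C J (ge i)).unop = ↑(tJ C J i)⁻¹ * bF C J i := by
  simp [phiFree, ge, phiGen]

@[simp] lemma unop_phiFree_gf (i : I) : (phiFree C J (gf i)).unop = bE C J i * tJ C J i := by
  simp [phiFree, gf, phiGen]

@[simp] lemma unop_phiFree_gT (i : I) : (phiFree C J (gT i)).unop = bT C J i := by
  simp [phiFree, gT, phiGen]

@[simp] lemma unop_phiFree_gTinv (i : I) : (phiFree C J (gTinv i)).unop = bTinv C J i := by
  simp [phiFree, gTinv, phiGen]

lemma unop_phiFree_serreF {i j : I} (hij : i ≠ j) : (phiFree C J (serreF C i j)).unop = 0 := by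
  obtain ⟨κ, hκ⟩ := exists_serre_exponent C J hij
  set N := (1 - C.a i j).toNat
  have hE : serreSum (fun s => serreCoeff (C.d i) N s * qpow (C.d i * serreTwist C J i j s)) N
      (bE C J i) (bE C J j) = 0 := by
    rw [bE, bE, ← AlgHom.map_serreSum, ← serreEB_eq_serreSum,
      bMk_eq_of_rel C J (BRel.serre_e i j hij), map_zero]
  rw [serreF_eq_serreSum, AlgHom.map_serreSum, MulOpposite.unop_serreSum, unop_phiFree_gf,
    unop_phiFree_gf, serreSum_mul_right (commute_tJ C J i j) (qComm_tJ_bE C J i i)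
      (qComm_tJ_bE C J i j) (qComm_tJ_bE C J j i),
    serreSum_congr (c' := fun s => ((-1) ^ N * qpow κ) *
      (serreCoeff (C.d i) N s * qpow (C.d i * serreTwist C J i j s))), serreSum_const_mul, hE,
    smul_zero, zero_mul]
  intro s hs
  rw [hκ s hs, qpow_add, serreCoeff_symm hs]
  ring

lemma unop_phiFree_serreEB {i j : I} (hij : i ≠ j) :
    (phiFree C J (serreEB C J i j)).unop = 0 := by
  obtain ⟨κ, hκ⟩ := exists_serre_exponent C J hij
  set N := (1 - C.a i j).toNat
  have hF : serreSum (serreCoeff (C.d i) N) N (bF C J i) (bF C J j) = 0 := by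
    rw [bF, bF, ← AlgHom.map_serreSum, ← serreF_eq_serreSum,
      bMk_eq_of_rel C J (BRel.serre_f i j hij), map_zero]
  rw [serreEB_eq_serreSum, AlgHom.map_serreSum, MulOpposite.unop_serreSum, unop_phiFree_ge,
    unop_phiFree_ge, serreSum_mul_left (commute_tJ C J i j).units_inv_left.units_inv_right
      (qComm_bF_tJ_inv C J i i) (qComm_bF_tJ_inv C J i j) (qComm_bF_tJ_inv C J j i),
    serreSum_congr (c' := fun s => ((-1) ^ N * qpow (-κ)) * serreCoeff (C.d i) N s),
    serreSum_const_mul, hF, smul_zero, mul_zero]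
  intro s hs
  have hκ' := hκ (N - s) (Nat.sub_le N s)
  rw [Nat.sub_sub_self hs] at hκ'
  rw [mul_assoc, ← qpow_add, serreCoeff_symm hs, mul_right_comm]
  congr 3
  linear_combination -hκ'

lemma qComm_phiGen_f_e {i j : I} (hij : i ≠ j) :
    QComm (if i ∈ J then 0 else -(C.d i * C.a i j))
      (bE C J j * tJ C J j) (↑(tJ C J i)⁻¹ * bF C J i) := by
  have h := (qComm_bE_tJ_inv C J i j).mul_mul (qComm_bE_bF C J hij.symm)
    (QComm.zero_iff.mpr (commute_tJ C J j i).units_inv_right) (qComm_tJ_bF C J j i)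
  convert h using 2
  by_cases hi : i ∈ J <;> by_cases hj : j ∈ J <;> simp [muJ, hi, hj, C.symm i j]

lemma tJ_inv_mul_bF_mul_bE_mul_tJ (i : I) :
    ↑(tJ C J i)⁻¹ * bF C J i * bE C J i * tJ C J i = bF C J i * bE C J i := by
  have h : Commute (tJ C J i : BqJ C J) (bF C J i * bE C J i) := by
    simpa [QComm.zero_iff] using (qComm_tJ_bF C J i i).mul_right (qComm_tJ_bE C J i i)
  rw [mul_assoc, mul_assoc, ← mul_assoc (bF C J i), ← h.eq, Units.inv_mul_cancel_left]

lemma phiFree_eq_of_rel {x y : FA I} (h : BRel C J x y) : phiFree C J x = phiFree C J y := by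
  apply MulOpposite.unop_injective
  cases h with
  | t_tinv i => simpa using bTinv_mul_bT C J i
  | tinv_t i => simpa using bT_mul_bTinv C J i
  | t_t i j => simpa using (commute_bT C J j i).eq
  | t_tinv_comm i j => simpa using (commute_bT_bTinv C J i j).eq.symm
  | t_e i j =>
    simpa [QComm] using ((QComm.zero_iff.mpr (commute_bT_tJ C J i j).units_inv_right).mul_right
      (qComm_bT_bF C J i j)).symm
  | t_f i j =>
    simpa [QComm] using ((qComm_bT_bE C J i j).mul_right
      (QComm.zero_iff.mpr (commute_bT_tJ C J i j))).symm
  | e_f_mem i j hi =>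
    rcases eq_or_ne i j with rfl | hij
    · simpa [← mul_assoc, tJ_inv_mul_bF_mul_bE_mul_tJ] using bE_mul_bF_sub_of_mem C J hi i
    · simpa [QComm, qpow_zero, hi, hij, sub_eq_zero] using qComm_phiGen_f_e C J hij
  | e_f_not i j hi =>
    rcases eq_or_ne i j with rfl | hij
    · simpa [tJ, hi] using bE_mul_bF_of_notMem C J hi i
    · simpa [QComm, hi, hij] using qComm_phiGen_f_e C J hij
  | serre_f i j hij => simpa using unop_phiFree_serreF C J hij
  | serre_e i j hij => simpa using unop_phiFree_serreEB C J hij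

def phiHom : BqJ C J →ₐ[KK] (BqJ C J)ᵐᵒᵖ :=
  RingQuot.liftAlgHom KK ⟨phiFree C J, fun _ _ h => phiFree_eq_of_rel C J h⟩

lemma phiHom_bMk (x : FA I) : phiHom C J (bMk C J x) = phiFree C J x :=
  RingQuot.liftAlgHom_mkAlgHom_apply ..

@[simp] lemma unop_phiHom_bE (i : I) :
    (phiHom C J (bE C J i)).unop = ↑(tJ C J i)⁻¹ * bF C J i :=
  (congrArg MulOpposite.unop (phiHom_bMk C J (ge i))).trans (unop_phiFree_ge C J i)

@[simp] lemma unop_phiHom_bF (i : I) : (phiHom C J (bF C J i)).unop = bE C J i * tJ C J i :=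
  (congrArg MulOpposite.unop (phiHom_bMk C J (gf i))).trans (unop_phiFree_gf C J i)

@[simp] lemma unop_phiHom_bT (i : I) : (phiHom C J (bT C J i)).unop = bT C J i :=
  (congrArg MulOpposite.unop (phiHom_bMk C J (gT i))).trans (unop_phiFree_gT C J i)

@[simp] lemma unop_phiHom_bTinv (i : I) : (phiHom C J (bTinv C J i)).unop = bTinv C J i :=
  (congrArg MulOpposite.unop (phiHom_bMk C J (gTinv i))).trans (unop_phiFree_gTinv C J i)

@[simp] lemma unop_phiHom_tJ (i : I) : (phiHom C J (tJ C J i)).unop = tJ C J i := by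
  by_cases hi : i ∈ J <;> simp [tJ, bTUnit, hi]

@[simp] lemma unop_phiHom_tJ_inv (i : I) :
    (phiHom C J ↑(tJ C J i)⁻¹).unop = ↑(tJ C J i)⁻¹ := by
  by_cases hi : i ∈ J <;> simp [tJ, bTUnit, hi]

lemma unop_phiHom_unop_phiHom (a : BqJ C J) : (phiHom C J (phiHom C J a).unop).unop = a := by
  suffices (AlgHom.opComm (phiHom C J)).comp (phiHom C J) = AlgHom.id KK _ from
    AlgHom.congr_fun this a
  ext g
  cases g with
  | e i => change (phiHom C J (phiHom C J (bE C J i)).unop).unop = bE C J i; simp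
  | f i => change (phiHom C J (phiHom C J (bF C J i)).unop).unop = bF C J i; simp
  | t i => change (phiHom C J (phiHom C J (bT C J i)).unop).unop = bT C J i; simp
  | tinv i => change (phiHom C J (phiHom C J (bTinv C J i)).unop).unop = bTinv C J i; simp

end Boson

/-- There is a `ℚ(q)`-algebra anti-involution `φ` of the hybrid `q`-Boson algebra
`B_q^J(𝔤)` with `φ(f_i) = e_i` and `φ(e_i) = f_i` for `i ∈ I∖J`, `φ(f_i) = e_i t_i` and
`φ(e_i) = t_i^{-1} f_i` for `i ∈ J`, and `φ(q^h) = q^h`. -/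
theorem qBoson_anti_involution
    (I : Type) [DecidableEq I] (C : CartanData I) (J : Set I) [DecidablePred (· ∈ J)] :
    ∃ φ : BqJ C J → BqJ C J,
      (∀ a b : BqJ C J, φ (a + b) = φ a + φ b) ∧
      (∀ (c : KK) (a : BqJ C J), φ (c • a) = c • φ a) ∧
      (∀ a b : BqJ C J, φ (a * b) = φ b * φ a) ∧
      φ 1 = 1 ∧
      (∀ a : BqJ C J, φ (φ a) = a) ∧
      (∀ i : I, i ∉ J → φ (bF C J i) = bE C J i ∧ φ (bE C J i) = bF C J i) ∧
      (∀ i : I, i ∈ J →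
        φ (bF C J i) = bE C J i * bT C J i ∧ φ (bE C J i) = bTinv C J i * bF C J i) ∧
      (∀ i : I, φ (bT C J i) = bT C J i) ∧
      (∀ i : I, φ (bTinv C J i) = bTinv C J i) := by
  refine ⟨fun a => (phiHom C J a).unop, by simp, by simp, by simp, by simp,
    unop_phiHom_unop_phiHom C J, fun i hi => ?_, fun i hi => ?_, by simp, by simp⟩ <;>
  simp [tJ, bTUnit, hi]

end
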